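/- arXiv:1804.05893 — 6 statements merged into one kernel-verified Lean document; each statement's English description precedes it below -/
import Mathlib

section
/- Let ρ₁(x) = arcsinh(b₁ cosh(x−a₁)) and ρ₂(x) = arcsinh(b₂ cosh(x−a₂)) with b₁, b₂ > 0 and (a₁,b₁) ≠ (a₂,b₂). Then the equation ρ₁(x) = ρ₂(x) has at most one real solution. -/
/-!
Since `arsinh` is injective, the two functions agree exactly where `b₁ cosh (x - a₁)` and
`b₂ cosh (x - a₂)` do. Expanding `cosh (x - a)`, their difference is `A cosh x + B sinh x` with
coefficients determined by `(b cosh a, b sinh a)`, and such a combination has two distinct zeros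
only if `A = B = 0`, the Wronskian-type determinant being `sinh (x - y) ≠ 0`. Finally
`(a, b) ↦ (b cosh a, b sinh a)` is injective on `b > 0`: these are hyperbolic polar coordinates,
with `b² = (b cosh a)² - (b sinh a)²`.
-/

open Real

lemma eq_zero_of_mul_cosh_add_mul_sinh_eq_zero {A B x y : ℝ} (hxy : x ≠ y)
    (hx : A * cosh x + B * sinh x = 0) (hy : A * cosh y + B * sinh y = 0) :
    A = 0 ∧ B = 0 := by
  have hs : sinh (x - y) ≠ 0 := by rwa [Ne, sinh_eq_zero, sub_eq_zero]
  constructor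
  · refine (mul_eq_zero.mp ?_).resolve_right hs
    rw [sinh_sub]
    linear_combination sinh x * hy - sinh y * hx
  · refine (mul_eq_zero.mp ?_).resolve_right hs
    rw [sinh_sub]
    linear_combination cosh y * hx - cosh x * hy

lemma eq_of_mul_cosh_eq_of_mul_sinh_eq {a₁ a₂ b₁ b₂ : ℝ} (hb₁ : 0 < b₁) (hb₂ : 0 < b₂)
    (hc : b₁ * cosh a₁ = b₂ * cosh a₂) (hs : b₁ * sinh a₁ = b₂ * sinh a₂) :
    a₁ = a₂ ∧ b₁ = b₂ := by
  have hsq : b₁ ^ 2 = b₂ ^ 2 := by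
    linear_combination (b₁ * cosh a₁ + b₂ * cosh a₂) * hc - (b₁ * sinh a₁ + b₂ * sinh a₂) * hs
      - b₁ ^ 2 * cosh_sq_sub_sinh_sq a₁ + b₂ ^ 2 * cosh_sq_sub_sinh_sq a₂
  obtain rfl : b₁ = b₂ := (sq_eq_sq₀ hb₁.le hb₂.le).mp hsq
  exact ⟨sinh_injective (mul_left_cancel₀ hb₁.ne' hs), rfl⟩

/-- Two distinct distance-like functions `x ↦ arcsinh (b cosh (x - a))` (with `b > 0`)
agree at most once. -/
theorem distance_like_agree_at_most_once
    (a₁ a₂ b₁ b₂ : ℝ) (hb₁ : 0 < b₁) (hb₂ : 0 < b₂)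
    (hne : (a₁, b₁) ≠ (a₂, b₂)) :
    {x : ℝ | Real.arsinh (b₁ * Real.cosh (x - a₁)) =
             Real.arsinh (b₂ * Real.cosh (x - a₂))}.Subsingleton := by
  have difference_eq_zero : ∀ t, arsinh (b₁ * cosh (t - a₁)) = arsinh (b₂ * cosh (t - a₂)) →
      (b₁ * cosh a₁ - b₂ * cosh a₂) * cosh t + (b₂ * sinh a₂ - b₁ * sinh a₁) * sinh t = 0 := by
    intro t ht
    have h := arsinh_injective ht
    rw [cosh_sub, cosh_sub] at h
    linear_combination h
  intro x hx y hy
  by_contra hxy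
  obtain ⟨hA, hB⟩ :=
    eq_zero_of_mul_cosh_add_mul_sinh_eq_zero hxy (difference_eq_zero x hx) (difference_eq_zero y hy)
  obtain ⟨ha, hb⟩ :=
    eq_of_mul_cosh_eq_of_mul_sinh_eq hb₁ hb₂ (sub_eq_zero.mp hA) (sub_eq_zero.mp hB).symm
  exact hne (Prod.ext ha hb)
end

section
/- Let ρ₁(x) = arcsinh(b₁ cosh(x−a₁)) and ρ₂(x) = arcsinh(b₂ cosh(x−a₂)) with b₁, b₂ > 0. If ρ₁(x₀) = ρ₂(x₀) and ρ₁'(x₀) > ρ₂'(x₀) at some point x₀, then a₂ > a₁. -/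
/-- If two distance-like functions agree at `x₀` and the derivative of the first is
strictly bigger there, then `a₂ > a₁`. -/
theorem distance_like_deriv_compare
    (a₁ a₂ b₁ b₂ x₀ : ℝ) (hb₁ : 0 < b₁) (hb₂ : 0 < b₂)
    (heq : Real.arsinh (b₁ * Real.cosh (x₀ - a₁)) =
           Real.arsinh (b₂ * Real.cosh (x₀ - a₂)))
    (hder : deriv (fun x => Real.arsinh (b₁ * Real.cosh (x - a₁))) x₀ >
            deriv (fun x => Real.arsinh (b₂ * Real.cosh (x - a₂))) x₀) :
    a₂ > a₁ := by
  set u := x₀ - a₁ with hu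
  set v := x₀ - a₂ with hv
  have harg : b₁ * Real.cosh u = b₂ * Real.cosh v := Real.arsinh_injective heq
  -- compute derivatives
  have hd1 : HasDerivAt (fun x => Real.arsinh (b₁ * Real.cosh (x - a₁)))
      ((Real.sqrt (1 + (b₁ * Real.cosh u) ^ 2))⁻¹ * (b₁ * Real.sinh u)) x₀ := by
    have hinner : HasDerivAt (fun x => b₁ * Real.cosh (x - a₁)) (b₁ * Real.sinh u) x₀ := by
      have : HasDerivAt (fun x : ℝ => x - a₁) 1 x₀ := (hasDerivAt_id x₀).sub_const a₁
      have h := ((Real.hasDerivAt_cosh u).comp x₀ (h := fun x : ℝ => x - a₁) (by simpa using this)).const_mul b₁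
      convert h using 1
      rfl
      rfl
      rfl
      ring
    exact (Real.hasDerivAt_arsinh _).comp x₀ hinner
  have hd2 : HasDerivAt (fun x => Real.arsinh (b₂ * Real.cosh (x - a₂)))
      ((Real.sqrt (1 + (b₂ * Real.cosh v) ^ 2))⁻¹ * (b₂ * Real.sinh v)) x₀ := by
    have hinner : HasDerivAt (fun x => b₂ * Real.cosh (x - a₂)) (b₂ * Real.sinh v) x₀ := by
      have : HasDerivAt (fun x : ℝ => x - a₂) 1 x₀ := (hasDerivAt_id x₀).sub_const a₂
      have h := ((Real.hasDerivAt_cosh v).comp x₀ (h := fun x : ℝ => x - a₂) (by simpa using this)).const_mul b₂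
      convert h using 1
      rfl
      rfl
      rfl
      ring
    exact (Real.hasDerivAt_arsinh _).comp x₀ hinner
  rw [hd1.deriv, hd2.deriv, harg] at hder
  have hDpos : 0 < Real.sqrt (1 + (b₂ * Real.cosh v) ^ 2) :=
    Real.sqrt_pos.2 (by positivity)
  have hsinh : b₁ * Real.sinh u > b₂ * Real.sinh v := by
    exact (mul_lt_mul_iff_right₀ (inv_pos.2 hDpos)).1 hder
  -- deduce sinh (u - v) > 0
  have hcv : 0 < Real.cosh v := Real.cosh_pos v
  have key : 0 < Real.sinh (u - v) := by
    rw [Real.sinh_sub]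
    have h1 : b₂ * Real.sinh v * Real.cosh v < b₁ * Real.sinh u * Real.cosh v :=
      mul_lt_mul_of_pos_right hsinh hcv
    have h2 : b₂ * Real.cosh v * Real.sinh v = b₁ * Real.cosh u * Real.sinh v := by rw [harg]
    nlinarith [hb₁, h1, h2]
  have huv : v < u := by
    by_contra h
    push_neg at h
    have : Real.sinh (u - v) ≤ 0 := by
      have : u - v ≤ 0 := by linarith
      simpa using Real.sinh_nonpos_iff.mpr this
    linarith
  simp only [hu, hv] at huv
  linarith
end

section
/- Let ABC be an ideal hyperbolic triangle whose ideal vertices are decorated by horocycles, with signed side lengths a, b, c (lengths of sides BC, CA, AB measured between the horocycles, negative if the horocycles intersect), and let α_A be the length of the arc of the horocycle at A contained in the triangle. Then α_A² = e^{a−b−c}. -/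
/-! On the side through the light-like vectors `l` and `m`, the point of the horocycle `l` is
`p = μ l + ν m`; the conditions `⟨p, l⟩ = -1` and `⟨p, p⟩ = -1` read `ν ⟨l, m⟩ = -1` and
`2 μ ν ⟨l, m⟩ = -1`, so `p = l / 2 - m / ⟨l, m⟩`. Substituting both points into `⟨p, q⟩`
leaves `-1 + ⟨lB, lC⟩ / (2 ⟨lA, lB⟩ ⟨lA, lC⟩) = -1 - e^{a-b-c} / 2`. -/

/-- The Minkowski bilinear form on `ℝ^{1,2}`. -/
def mink (x y : Fin 3 → ℝ) : ℝ := -(x 0 * y 0) + x 1 * y 1 + x 2 * y 2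

lemma mink_comm (x y : Fin 3 → ℝ) : mink x y = mink y x := by
  simp only [mink]; ring

lemma mink_smul_add_smul_left (μ ν : ℝ) (x y z : Fin 3 → ℝ) :
    mink (μ • x + ν • y) z = μ * mink x z + ν * mink y z := by
  simp only [mink, Pi.add_apply, Pi.smul_apply, smul_eq_mul]; ring

lemma mink_smul_add_smul_right (μ ν : ℝ) (x y z : Fin 3 → ℝ) :
    mink z (μ • x + ν • y) = μ * mink z x + ν * mink z y := by
  rw [mink_comm, mink_smul_add_smul_left, mink_comm x, mink_comm y]

lemma eq_of_mem_horocycle_of_mem_span {l m p : Fin 3 → ℝ}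
    (hl : mink l l = 0) (hm : mink m m = 0) (hlm : mink l m ≠ 0)
    (hp : mink p p = -1) (hpl : mink p l = -1) (hspan : ∃ μ ν : ℝ, p = μ • l + ν • m) :
    p = (1 / 2 : ℝ) • l + (-(mink l m)⁻¹) • m := by
  obtain ⟨μ, ν, rfl⟩ := hspan
  rw [mink_smul_add_smul_left, hl, mink_comm m] at hpl
  rw [mink_smul_add_smul_left, mink_smul_add_smul_right, mink_smul_add_smul_right, hl, hm,
    mink_comm m] at hp
  have hν : ν = -(mink l m)⁻¹ := by
    field_simp
    linarith
  have hμ : μ = 1 / 2 := by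
    linear_combination (-1 / 2 : ℝ) * hp + μ * hpl
  rw [hμ, hν]

theorem ideal_triangle_horocyclic_arc_general
    (lA lB lC p q : Fin 3 → ℝ) (a b c αA : ℝ)
    (hlA : mink lA lA = 0)
    (hlB : mink lB lB = 0)
    (hlC : mink lC lC = 0)
    (ha : mink lB lC = -2 * Real.exp a)
    (hb : mink lA lC = -2 * Real.exp b)
    (hc : mink lA lB = -2 * Real.exp c)
    (hp : mink p p = -1) (hpA : mink p lA = -1)
    (hpAB : ∃ μ ν : ℝ, p = μ • lA + ν • lB)
    (hq : mink q q = -1) (hqA : mink q lA = -1)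
    (hqAC : ∃ μ ν : ℝ, q = μ • lA + ν • lC)
    (harc : mink p q = -1 - αA ^ 2 / 2) :
    αA ^ 2 = Real.exp (a - b - c) := by
  have hb0 : Real.exp b ≠ 0 := (Real.exp_pos b).ne'
  have hc0 : Real.exp c ≠ 0 := (Real.exp_pos c).ne'
  rw [eq_of_mem_horocycle_of_mem_span hlA hlB (by rw [hc]; simp [hc0]) hp hpA hpAB,
    eq_of_mem_horocycle_of_mem_span hlA hlC (by rw [hb]; simp [hb0]) hq hqA hqAC,
    mink_smul_add_smul_left, mink_smul_add_smul_right, mink_smul_add_smul_right, hlA,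
    mink_comm lB lA, hb, hc, ha] at harc
  rw [Real.exp_sub, Real.exp_sub]
  field_simp at harc ⊢
  linear_combination (1 / 2 : ℝ) * harc

/-- Penner's relation for a decorated ideal hyperbolic triangle, in the hyperboloid model.
The vertices are represented by future light-like vectors `lA, lB, lC` (the polar vectors of
the decorating horocycles), the signed side lengths `a, b, c` are given by
`⟨l, l'⟩ = -2 e^{dist}`, the points `p, q` are the intersections of the horocycle at `A` with
the sides `AB`, `AC`, and `αA ≥ 0` is the horocyclic arc length between them, characterized by
`⟨p, q⟩ = -1 - αA²/2`.  Then `αA² = e^{a-b-c}`. -/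
theorem ideal_triangle_horocyclic_arc
    (lA lB lC p q : Fin 3 → ℝ) (a b c αA : ℝ)
    (hlA : mink lA lA = 0) (hlA0 : 0 < lA 0)
    (hlB : mink lB lB = 0) (hlB0 : 0 < lB 0)
    (hlC : mink lC lC = 0) (hlC0 : 0 < lC 0)
    (hABind : ¬ ∃ t : ℝ, lB = t • lA)
    (hACind : ¬ ∃ t : ℝ, lC = t • lA)
    (ha : mink lB lC = -2 * Real.exp a)
    (hb : mink lA lC = -2 * Real.exp b)
    (hc : mink lA lB = -2 * Real.exp c)
    (hp : mink p p = -1) (hp0 : 0 < p 0) (hpA : mink p lA = -1)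
    (hpAB : ∃ μ ν : ℝ, p = μ • lA + ν • lB)
    (hq : mink q q = -1) (hq0 : 0 < q 0) (hqA : mink q lA = -1)
    (hqAC : ∃ μ ν : ℝ, q = μ • lA + ν • lC)
    (hα : 0 ≤ αA) (harc : mink p q = -1 - αA ^ 2 / 2) :
    αA ^ 2 = Real.exp (a - b - c) :=
  ideal_triangle_horocyclic_arc_general lA lB lC p q a b c αA hlA hlB hlC ha hb hc hp hpA hpAB hq
    hqA hqAC harc
end

section
/- In the hyperboloid model, if l̄₁, l̄₂ ∈ 𝕃 are polar vectors of two horospheres L₁, L₂ with distinct centers, then ⟨l̄₁, l̄₂⟩ = −2e^{dist(L₁,L₂)}, where dist(L₁,L₂) is the signed length of the common perpendicular (negative if the horospheres intersect). -/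
/-!
Write the feet of the common perpendicular as `p = μ l₁ + ν l₂`, `q = α l₁ + β l₂` and put
`s = ⟨l₁, l₂⟩`. As `l₁, l₂` are null, `⟨p, p⟩ = ⟨p, l₁⟩ = -1` forces `μ = 1/2` and `ν s = -1`,
and symmetrically for `q`. Then `cosh r = -⟨p, q⟩ = (u + u⁻¹)/2` with `u = -s/2`, so
`r = ± log u`, and the sign convention `0 ≤ r ↔ ⟨p, l₂⟩ = s/2 ≤ -1` selects `r = log u`.
-/

/-- The Minkowski bilinear form on `ℝ^{1,3}`. -/
def mink4 (x y : Fin 4 → ℝ) : ℝ := -(x 0 * y 0) + x 1 * y 1 + x 2 * y 2 + x 3 * y 3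

lemma mink4_comm (x y : Fin 4 → ℝ) : mink4 x y = mink4 y x := by
  unfold mink4; ring

lemma mink4_smul_add_smul_left (a b : ℝ) (x y z : Fin 4 → ℝ) :
    mink4 (a • x + b • y) z = a * mink4 x z + b * mink4 y z := by
  simp only [mink4, Pi.add_apply, Pi.smul_apply, smul_eq_mul]; ring

lemma mink4_smul_add_smul_of_null {x y : Fin 4 → ℝ} (hx : mink4 x x = 0) (hy : mink4 y y = 0)
    (a b c d : ℝ) :
    mink4 (a • x + b • y) (c • x + d • y) = (a * d + b * c) * mink4 x y := by
  simp only [mink4, Pi.add_apply, Pi.smul_apply, smul_eq_mul] at *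
  linear_combination (a * c) * hx + (b * d) * hy

/-- `p` is where the geodesic joining the centers `l₁`, `l₂` meets the horosphere of `l₁`. -/
lemma foot_coeffs_of_null {l₁ l₂ p : Fin 4 → ℝ} {μ ν : ℝ}
    (hl₁ : mink4 l₁ l₁ = 0) (hl₂ : mink4 l₂ l₂ = 0)
    (hp : mink4 p p = -1) (hpL : mink4 p l₁ = -1) (hpe : p = μ • l₁ + ν • l₂) :
    μ = 1 / 2 ∧ ν * mink4 l₁ l₂ = -1 := by
  have hpp := mink4_smul_add_smul_of_null hl₁ hl₂ μ ν μ ν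
  have hpl : mink4 p l₁ = ν * mink4 l₁ l₂ := by
    rw [hpe, mink4_smul_add_smul_left, hl₁, mink4_comm l₂]; ring
  rw [← hpe, hp] at hpp
  rw [hpL] at hpl
  exact ⟨by linear_combination (1 / 2) * hpp - μ * hpl, hpl.symm⟩

lemma Real.exp_eq_of_cosh_eq {r u : ℝ} (h : Real.cosh r = (u + u⁻¹) / 2)
    (hsign : 0 ≤ r ↔ 1 ≤ u) : Real.exp r = u := by
  have hu : 0 < u := by
    by_contra! hu
    linarith [Real.cosh_pos r, inv_nonpos.mpr hu]
  have hcosh : Real.cosh r = Real.cosh (Real.log u) := by rw [h, Real.cosh_log hu]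
  have habs : |r| = |Real.log u| :=
    le_antisymm (Real.cosh_le_cosh.mp hcosh.le) (Real.cosh_le_cosh.mp hcosh.ge)
  rw [← Real.log_nonneg_iff hu] at hsign
  suffices r = Real.log u by rw [this, Real.exp_log hu]
  rcases abs_eq_abs.mp habs with h | h
  · exact h
  · rcases le_total 0 r with hr | hr
    · linarith [hsign.mp hr]
    · linarith [hsign.mpr (by linarith)]

theorem dist_two_horospheres_general
    (l₁ l₂ p q : Fin 4 → ℝ) (r : ℝ)
    (hl₁ : mink4 l₁ l₁ = 0)
    (hl₂ : mink4 l₂ l₂ = 0)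
    (hp : mink4 p p = -1) (hpL : mink4 p l₁ = -1)
    (hpgeo : ∃ μ ν : ℝ, p = μ • l₁ + ν • l₂)
    (hq : mink4 q q = -1) (hqL : mink4 q l₂ = -1)
    (hqgeo : ∃ μ ν : ℝ, q = μ • l₁ + ν • l₂)
    (hr : Real.cosh r = -(mink4 p q))
    (hsign : 0 ≤ r ↔ mink4 p l₂ ≤ -1) :
    mink4 l₁ l₂ = -2 * Real.exp r := by
  obtain ⟨μ, ν, hpe⟩ := hpgeo
  obtain ⟨α, β, hqe⟩ := hqgeo
  set s := mink4 l₁ l₂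
  obtain ⟨hμ, hνs⟩ := foot_coeffs_of_null hl₁ hl₂ hp hpL hpe
  obtain ⟨hβ, hαs⟩ := foot_coeffs_of_null hl₂ hl₁ hq hqL (hqe.trans (add_comm _ _))
  rw [mink4_comm] at hαs
  have hs : s ≠ 0 := right_ne_zero_of_mul (by rw [hνs]; norm_num)
  have hpq : mink4 p q = (μ * β + ν * α) * s := by
    rw [hpe, hqe, mink4_smul_add_smul_of_null hl₁ hl₂]
  have hpl₂ : mink4 p l₂ = s / 2 := by
    rw [hpe, mink4_smul_add_smul_left, hl₂, hμ]; ring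
  have hcosh : Real.cosh r = (-s / 2 + (-s / 2)⁻¹) / 2 := by
    rw [hr, hpq, hμ, hβ]
    field_simp
    linear_combination (-4 * ν * s) * hαs + 4 * hνs
  have hsign' : 0 ≤ r ↔ 1 ≤ -s / 2 := by
    rw [hsign, hpl₂]; constructor <;> intro <;> linarith
  linarith [Real.exp_eq_of_cosh_eq hcosh hsign']

/-- In the hyperboloid model, for the polar vectors `l₁, l₂ ∈ 𝕃` of two horospheres with
distinct centers, `⟨l₁, l₂⟩ = -2 e^{dist(L₁, L₂)}`.  The signed distance `r` is the signed
length of the common perpendicular: `p` and `q` are the intersections of the geodesic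
through the two ideal centers with the horospheres `L₁` and `L₂`, `cosh r = -⟨p, q⟩`, and
`r ≥ 0` iff `p` is not inside the open horoball bounded by `L₂`. -/
theorem dist_two_horospheres
    (l₁ l₂ p q : Fin 4 → ℝ) (r : ℝ)
    (hl₁ : mink4 l₁ l₁ = 0) (hl₁0 : 0 < l₁ 0)
    (hl₂ : mink4 l₂ l₂ = 0) (hl₂0 : 0 < l₂ 0)
    (hind : ¬ ∃ t : ℝ, l₂ = t • l₁)
    (hp : mink4 p p = -1) (hp0 : 0 < p 0) (hpL : mink4 p l₁ = -1)
    (hpgeo : ∃ μ ν : ℝ, p = μ • l₁ + ν • l₂)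
    (hq : mink4 q q = -1) (hq0 : 0 < q 0) (hqL : mink4 q l₂ = -1)
    (hqgeo : ∃ μ ν : ℝ, q = μ • l₁ + ν • l₂)
    (hr : Real.cosh r = -(mink4 p q))
    (hsign : 0 ≤ r ↔ mink4 p l₂ ≤ -1) :
    mink4 l₁ l₂ = -2 * Real.exp r :=
  dist_two_horospheres_general l₁ l₂ p q r hl₁ hl₂ hp hpL hpgeo hq hqL hqgeo hr hsign
end

section
/- For a semi-ideal ultraparallel trapezoid with ideal upper vertices decorated by horocycles, the length α₁₂ of the horocyclic arc at A₁ inside the trapezoid satisfies α₁₂² = e^{r₂ − r₁ − l₁₂} + e^{−2r₁}, where l₁₂ is the signed length of the upper edge and r₁, r₂ the signed lengths of the lateral edges. -/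
lemma mink_add_left (x y z : Fin 3 → ℝ) :
    mink (x + y) z = mink x z + mink y z := by
  unfold mink; simp [Pi.add_apply]; ring

lemma mink_add_right (x y z : Fin 3 → ℝ) :
    mink x (y + z) = mink x y + mink x z := by
  unfold mink; simp [Pi.add_apply]; ring

lemma mink_smul_left (t : ℝ) (x y : Fin 3 → ℝ) :
    mink (t • x) y = t * mink x y := by
  unfold mink; simp [Pi.smul_apply, smul_eq_mul]; ring

lemma mink_smul_right (t : ℝ) (x y : Fin 3 → ℝ) :
    mink x (t • y) = t * mink x y := by
  unfold mink; simp [Pi.smul_apply, smul_eq_mul]; ring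

/-- For a semi-ideal ultraparallel trapezoid with decorated ideal upper vertices
(`l₁, l₂` future light-like polar vectors of the horocycles, `B₁, B₂` their orthogonal
projections to the lower line with unit normal `m`, signed upper edge length
`⟨l₁, l₂⟩ = -2 e^{l₁₂}`, signed lateral lengths `⟨Bᵢ, lᵢ⟩ = -e^{rᵢ}`), the length `α₁₂` of
the horocyclic arc at `A₁` inside the trapezoid — between the intersection point `p` of the
horocycle with the upper edge and the intersection point `q` with the lateral edge `A₁B₁`,
with `⟨p, q⟩ = -1 - α₁₂²/2` — satisfies `α₁₂² = e^{r₂ - r₁ - l₁₂} + e^{-2 r₁}`. -/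
theorem semi_ideal_trapezoid_horocyclic_arc
    (m B₁ B₂ l₁ l₂ p q : Fin 3 → ℝ) (l₁₂ r₁ r₂ α₁₂ : ℝ)
    (hm : mink m m = 1)
    (hB₁ : mink B₁ B₁ = -1) (hB₁0 : 0 < B₁ 0) (hB₁m : mink B₁ m = 0)
    (hB₂ : mink B₂ B₂ = -1) (hB₂0 : 0 < B₂ 0) (hB₂m : mink B₂ m = 0)
    (hl₁ : mink l₁ l₁ = 0) (hl₁0 : 0 < l₁ 0)
    (hl₂ : mink l₂ l₂ = 0) (hl₂0 : 0 < l₂ 0)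
    (hind : ¬ ∃ t : ℝ, l₂ = t • l₁)
    (hproj₁ : ∃ c : ℝ, 0 < c ∧ l₁ = c • (B₁ + m))
    (hproj₂ : ∃ c : ℝ, 0 < c ∧ l₂ = c • (B₂ + m))
    (hl₁₂ : mink l₁ l₂ = -2 * Real.exp l₁₂)
    (hr₁ : mink B₁ l₁ = -Real.exp r₁)
    (hr₂ : mink B₂ l₂ = -Real.exp r₂)
    (hp : mink p p = -1) (hp0 : 0 < p 0) (hpL : mink p l₁ = -1)
    (hpgeo : ∃ μ ν : ℝ, p = μ • l₁ + ν • l₂)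
    (hq : mink q q = -1) (hq0 : 0 < q 0) (hqL : mink q l₁ = -1)
    (hqgeo : ∃ μ ν : ℝ, q = μ • l₁ + ν • B₁)
    (hα : 0 ≤ α₁₂) (harc : mink p q = -1 - α₁₂ ^ 2 / 2) :
    α₁₂ ^ 2 = Real.exp (r₂ - r₁ - l₁₂) + Real.exp (-2 * r₁) := by
  obtain ⟨c, hc, hcdef⟩ := hproj₁
  obtain ⟨c', hc', hc'def⟩ := hproj₂
  obtain ⟨μ, ν, hpdef⟩ := hpgeo
  obtain ⟨μ', ν', hqdef⟩ := hqgeo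
  have hE : (0:ℝ) < Real.exp l₁₂ := Real.exp_pos _
  have hR₁ : (0:ℝ) < Real.exp r₁ := Real.exp_pos _
  have hR₂ : (0:ℝ) < Real.exp r₂ := Real.exp_pos _
  -- c = e^{r₁}
  have hc1 : c = Real.exp r₁ := by
    have h := hr₁
    rw [hcdef] at h
    simp only [mink_smul_right, mink_add_right] at h
    rw [hB₁, hB₁m] at h; linarith
  -- c' = e^{r₂}
  have hc2 : c' = Real.exp r₂ := by
    have h := hr₂
    rw [hc'def] at h
    simp only [mink_smul_right, mink_add_right] at h
    rw [hB₂, hB₂m] at h; linarith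
  -- ⟨m, l₂⟩ = e^{r₂}
  have hml₂ : mink m l₂ = Real.exp r₂ := by
    rw [hc'def]
    simp only [mink_smul_right, mink_add_right]
    rw [show mink m B₂ = 0 from by rw [mink_comm]; exact hB₂m, hm, hc2]; ring
  -- ⟨B₁, l₂⟩
  have hB₁l₂ : mink B₁ l₂ =
      -2 * Real.exp l₁₂ / Real.exp r₁ - Real.exp r₂ := by
    have h := hl₁₂
    rw [hcdef] at h
    simp only [mink_smul_left, mink_add_left] at h
    rw [hml₂, hc1] at h
    field_simp
    nlinarith [h]
  have hl₂l₁ : mink l₂ l₁ = -2 * Real.exp l₁₂ := by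
    rw [mink_comm]; exact hl₁₂
  have hl₁B₁ : mink l₁ B₁ = -Real.exp r₁ := by
    rw [mink_comm]; exact hr₁
  have hl₂B₁ : mink l₂ B₁ = -2 * Real.exp l₁₂ / Real.exp r₁ - Real.exp r₂ := by
    rw [mink_comm]; exact hB₁l₂
  -- coefficients of p
  have hν : ν = 1 / (2 * Real.exp l₁₂) := by
    have h := hpL
    rw [hpdef] at h
    simp only [mink_add_left, mink_smul_left] at h
    rw [hl₁, hl₂l₁] at h
    field_simp at h ⊢
    linarith
  have hμ : μ = 1 / 2 := by
    have h := hp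
    rw [hpdef] at h
    simp only [mink_add_left, mink_add_right, mink_smul_left, mink_smul_right] at h
    rw [hl₁, hl₂, hl₁₂, hl₂l₁, hν] at h
    field_simp at h
    have h2 : μ * Real.exp l₁₂ = (1/2) * Real.exp l₁₂ := by
      have h3 : (μ * Real.exp l₁₂ - 1/2 * Real.exp l₁₂) * (8 * Real.exp l₁₂) = 0 := by
        linear_combination (-1 : ℝ) * h
      rcases mul_eq_zero.mp h3 with h4 | h4
      · linarith
      · linarith
    exact mul_right_cancel₀ (ne_of_gt hE) h2
  -- coefficients of q
  have hν' : ν' = 1 / Real.exp r₁ := by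
    have h := hqL
    rw [hqdef] at h
    simp only [mink_add_left, mink_smul_left] at h
    rw [hl₁, hr₁] at h
    field_simp at h ⊢
    linarith
  have hμ' : μ' = (1 - 1 / Real.exp r₁ ^ 2) / 2 := by
    have h := hq
    rw [hqdef] at h
    simp only [mink_add_left, mink_add_right, mink_smul_left, mink_smul_right] at h
    rw [hl₁, hl₁B₁, hr₁, hB₁, hν'] at h
    field_simp at h ⊢
    ring_nf at h ⊢
    linarith
  -- compute ⟨p, q⟩
  have hpq : mink p q = -1 -
      (Real.exp r₂ / (Real.exp r₁ * Real.exp l₁₂) + 1 / Real.exp r₁ ^ 2) / 2 := by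
    rw [hpdef, hqdef]
    simp only [mink_add_left, mink_add_right, mink_smul_left, mink_smul_right]
    rw [hl₁, hl₁B₁, hl₂l₁, hl₂B₁, hμ, hν, hμ', hν']
    field_simp
    ring
  have hexp1 : Real.exp (r₂ - r₁ - l₁₂)
      = Real.exp r₂ / (Real.exp r₁ * Real.exp l₁₂) := by
    rw [Real.exp_sub, Real.exp_sub]; ring
  have hexp2 : Real.exp (-2 * r₁) = 1 / Real.exp r₁ ^ 2 := by
    rw [show (-2 : ℝ) * r₁ = -(r₁ + r₁) by ring, Real.exp_neg, Real.exp_add]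
    rw [pow_two, one_div]
  rw [hexp1, hexp2]
  rw [harc] at hpq
  linarith
end

section
/- Let f: ℝ → ℝ be a continuous function which is piecewise of the form arcsinh(b_i cosh(x − a_i)) with b_i > 0 on a finite partition ℝ = (−∞,x₀] ∪ [x₀,x₁] ∪ … ∪ [x_k,∞), with consecutive parameter pairs (a_i,b_i) ≠ (a_{i+1},b_{i+1}), and suppose at every breakpoint x_i the left derivative of f is strictly greater than the right derivative (concave kinks). If a distance-like function ρ(x) = arcsinh(b cosh(x−a)) satisfies ρ(x) > f(x) for all x in some interval (x_{i−1}, x_i) of the partition and in fact ρ > ρ_i everywhere on ℝ, where ρ_i is the distance-like function agreeing with f on (x_{i−1}, x_i), then ρ(x) > f(x) for all x ∈ ℝ. -/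
private lemma dl_deriv (b a x : ℝ) :
    deriv (fun t => Real.arsinh (b * Real.cosh (t - a))) x
      = (Real.sqrt (1 + (b * Real.cosh (x - a)) ^ 2))⁻¹ * (b * Real.sinh (x - a)) := by
  have h1 : HasDerivAt (fun t : ℝ => b * Real.cosh (t - a)) (b * Real.sinh (x - a)) x := by
    have h0 : HasDerivAt (fun t : ℝ => Real.cosh (t - a)) (Real.sinh (x - a)) x := by
      simpa [Function.comp_def] using (Real.hasDerivAt_cosh (x - a)).comp x ((hasDerivAt_id x).sub_const a)
    simpa using h0.const_mul b
  exact ((Real.hasDerivAt_arsinh _).comp x h1).deriv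

private lemma dl_diff_eq (b₁ a₁ b₂ a₂ x t : ℝ)
    (hval : b₁ * Real.cosh (x - a₁) = b₂ * Real.cosh (x - a₂)) :
    b₁ * Real.cosh (t - a₁) - b₂ * Real.cosh (t - a₂)
      = (b₁ * Real.sinh (x - a₁) - b₂ * Real.sinh (x - a₂)) * Real.sinh (t - x) := by
  simp only [Real.cosh_sub, Real.sinh_sub] at *
  linear_combination (Real.cosh t * Real.cosh x - Real.sinh t * Real.sinh x) * hval +
    ((b₁ * Real.sinh a₁ - b₂ * Real.sinh a₂) * Real.sinh t -
     (b₁ * Real.cosh a₁ - b₂ * Real.cosh a₂) * Real.cosh t) * (Real.cosh_sq_sub_sinh_sq x)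

private lemma dl_slope_pos (b₁ a₁ b₂ a₂ x : ℝ)
    (hval : b₁ * Real.cosh (x - a₁) = b₂ * Real.cosh (x - a₂))
    (hder : deriv (fun t => Real.arsinh (b₂ * Real.cosh (t - a₂))) x <
            deriv (fun t => Real.arsinh (b₁ * Real.cosh (t - a₁))) x) :
    b₂ * Real.sinh (x - a₂) < b₁ * Real.sinh (x - a₁) := by
  rw [dl_deriv, dl_deriv, ← hval] at hder
  have hpos : 0 < (Real.sqrt (1 + (b₁ * Real.cosh (x - a₁)) ^ 2))⁻¹ := by
    positivity
  exact lt_of_mul_lt_mul_left hder hpos.le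

private lemma dl_chainR (k : ℕ) (x : Fin (k + 1) → ℝ) (a b : Fin (k + 2) → ℝ)
    (hstep : ∀ m : Fin (k + 1), ∀ t, x m ≤ t →
      b m.succ * Real.cosh (t - a m.succ) ≤ b m.castSucc * Real.cosh (t - a m.castSucc)) :
    ∀ n : ℕ, ∀ p q : Fin (k + 2), (q : ℕ) ≤ (p : ℕ) + n → p ≤ q → ∀ t : ℝ,
      (∀ j : Fin (k + 1), (j : ℕ) < (q : ℕ) → x j ≤ t) →
      b q * Real.cosh (t - a q) ≤ b p * Real.cosh (t - a p) := by
  intro n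
  induction n with
  | zero =>
    intro p q h1 h2 t _
    have : p = q := le_antisymm h2 (Fin.le_def.2 (by omega))
    subst this; exact le_rfl
  | succ n ih =>
    intro p q h1 h2 t hcond
    by_cases h : (q : ℕ) ≤ (p : ℕ) + n
    · exact ih p q h h2 t hcond
    · have hpq : (p : ℕ) < (q : ℕ) := by omega
      have hqk : (q : ℕ) < k + 2 := q.isLt
      set m : Fin (k + 1) := ⟨(q : ℕ) - 1, by omega⟩ with hm
      have hms : m.succ = q := by
        apply Fin.ext; simp only [Fin.val_succ, hm]; omega
      have hmc : (m.castSucc : ℕ) = (q : ℕ) - 1 := rfl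
      have ht : x m ≤ t := hcond m (by simp only [hm]; omega)
      have h1' := hstep m t ht
      rw [hms] at h1'
      have h2' := ih p m.castSucc (by omega) (Fin.le_def.2 (by rw [hmc]; omega)) t
        (fun j hj => hcond j (by omega))
      exact le_trans h1' h2'

private lemma dl_chainL (k : ℕ) (x : Fin (k + 1) → ℝ) (a b : Fin (k + 2) → ℝ)
    (hstep : ∀ m : Fin (k + 1), ∀ t, t ≤ x m →
      b m.castSucc * Real.cosh (t - a m.castSucc) ≤ b m.succ * Real.cosh (t - a m.succ)) :
    ∀ n : ℕ, ∀ p q : Fin (k + 2), (p : ℕ) ≤ (q : ℕ) + n → q ≤ p → ∀ t : ℝ,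
      (∀ j : Fin (k + 1), (q : ℕ) ≤ (j : ℕ) → t ≤ x j) →
      b q * Real.cosh (t - a q) ≤ b p * Real.cosh (t - a p) := by
  intro n
  induction n with
  | zero =>
    intro p q h1 h2 t _
    have : q = p := le_antisymm h2 (Fin.le_def.2 (by omega))
    subst this; exact le_rfl
  | succ n ih =>
    intro p q h1 h2 t hcond
    by_cases h : (p : ℕ) ≤ (q : ℕ) + n
    · exact ih p q h h2 t hcond
    · have hpq : (q : ℕ) < (p : ℕ) := by omega
      have hpk : (p : ℕ) < k + 2 := p.isLt
      set m : Fin (k + 1) := ⟨(q : ℕ), by omega⟩ with hm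
      have hmc : m.castSucc = q := by apply Fin.ext; rfl
      have hmsv : (m.succ : ℕ) = (q : ℕ) + 1 := rfl
      have ht : t ≤ x m := hcond m (by simp only [hm]; omega)
      have h1' := hstep m t ht
      rw [hmc] at h1'
      have h2' := ih p m.succ (by omega) (Fin.le_def.2 (by rw [hmsv]; omega)) t
        (fun j hj => hcond j (by omega))
      exact le_trans h1' h2'

/-- Let `f` be a piecewise distance-like function: on the partition
`ℝ = (-∞, x₀] ∪ [x₀, x₁] ∪ … ∪ [x_k, ∞)` (with `x₀ < x₁ < … < x_k`) the function `f`
coincides on the `i`-th piece with `g i : t ↦ arcsinh (b i · cosh (t - a i))` (`b i > 0`),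
consecutive parameter pairs are distinct, and at every breakpoint the left derivative is
strictly greater than the right derivative (concave kinks).  If a distance-like function
`ρ(t) = arcsinh (B cosh (t - A))` dominates some piece `g i` on all of `ℝ`, then `ρ > f`
everywhere. -/
theorem piecewise_distance_like_dominated
    (k : ℕ) (x : Fin (k + 1) → ℝ) (a b : Fin (k + 2) → ℝ)
    (A B : ℝ) (f : ℝ → ℝ)
    (hb : ∀ i, 0 < b i) (hB : 0 < B)
    (hx : ∀ i j : Fin (k + 1), i < j → x i < x j)
    (hpiece : ∀ i : Fin (k + 2), ∀ t : ℝ,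
      (∀ j : Fin (k + 1), ((j : ℕ) < (i : ℕ) → x j ≤ t) ∧ ((i : ℕ) ≤ (j : ℕ) → t ≤ x j)) →
      f t = Real.arsinh (b i * Real.cosh (t - a i)))
    (hdist : ∀ i : Fin (k + 1), (a i.castSucc, b i.castSucc) ≠ (a i.succ, b i.succ))
    (hkink : ∀ i : Fin (k + 1),
      deriv (fun t => Real.arsinh (b i.castSucc * Real.cosh (t - a i.castSucc))) (x i) >
      deriv (fun t => Real.arsinh (b i.succ * Real.cosh (t - a i.succ))) (x i))
    (hdom : ∃ i : Fin (k + 2), ∀ t : ℝ,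
      Real.arsinh (B * Real.cosh (t - A)) > Real.arsinh (b i * Real.cosh (t - a i))) :
    ∀ t : ℝ, Real.arsinh (B * Real.cosh (t - A)) > f t := by
  have hxle : ∀ i j : Fin (k + 1), i ≤ j → x i ≤ x j := by
    intro i j h
    rcases lt_or_eq_of_le h with h | h
    · exact (hx i j h).le
    · rw [h]
  -- value equality at each breakpoint
  have hval : ∀ m : Fin (k + 1),
      b m.castSucc * Real.cosh (x m - a m.castSucc)
        = b m.succ * Real.cosh (x m - a m.succ) := by
    intro m
    have hc1 : f (x m) = Real.arsinh (b m.castSucc * Real.cosh (x m - a m.castSucc)) := by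
      apply hpiece
      intro j
      constructor
      · intro hj
        exact (hx j m (Fin.lt_def.2 hj)).le
      · intro hj
        exact hxle m j (Fin.le_def.2 hj)
    have hc2 : f (x m) = Real.arsinh (b m.succ * Real.cosh (x m - a m.succ)) := by
      apply hpiece
      intro j
      constructor
      · intro hj
        have : (j : ℕ) ≤ (m : ℕ) := by simpa [Fin.val_succ] using Nat.lt_succ_iff.1 hj
        exact hxle j m (Fin.le_def.2 this)
      · intro hj
        have : (m : ℕ) < (j : ℕ) := by
          have := hj; simp only [Fin.val_succ] at this; omega
        exact (hx m j (Fin.lt_def.2 this)).le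
    exact Real.arsinh_injective (hc1 ▸ hc2 ▸ rfl : _)
  -- the slope gap at each breakpoint
  have hslope : ∀ m : Fin (k + 1),
      b m.succ * Real.sinh (x m - a m.succ) < b m.castSucc * Real.sinh (x m - a m.castSucc) :=
    fun m => dl_slope_pos _ _ _ _ _ (hval m) (hkink m)
  -- step lemmas
  have hstepR : ∀ m : Fin (k + 1), ∀ t, x m ≤ t →
      b m.succ * Real.cosh (t - a m.succ) ≤ b m.castSucc * Real.cosh (t - a m.castSucc) := by
    intro m t ht
    have heq := dl_diff_eq (b m.castSucc) (a m.castSucc) (b m.succ) (a m.succ) (x m) t (hval m)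
    have hs : 0 ≤ Real.sinh (t - x m) := Real.sinh_nonneg_iff.2 (by linarith)
    nlinarith [hslope m]
  have hstepL : ∀ m : Fin (k + 1), ∀ t, t ≤ x m →
      b m.castSucc * Real.cosh (t - a m.castSucc) ≤ b m.succ * Real.cosh (t - a m.succ) := by
    intro m t ht
    have heq := dl_diff_eq (b m.castSucc) (a m.castSucc) (b m.succ) (a m.succ) (x m) t (hval m)
    have hs : Real.sinh (t - x m) ≤ 0 := by
      rw [show t - x m = -(x m - t) by ring, Real.sinh_neg]
      have := Real.sinh_nonneg_iff.2 (show (0:ℝ) ≤ x m - t by linarith)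
      linarith
    nlinarith [hslope m]
  obtain ⟨i, hi⟩ := hdom
  intro t
  -- find the piece containing t
  obtain ⟨i₀, hmem⟩ : ∃ i₀ : Fin (k + 2), ∀ j : Fin (k + 1),
      ((j : ℕ) < (i₀ : ℕ) → x j ≤ t) ∧ ((i₀ : ℕ) ≤ (j : ℕ) → t ≤ x j) := by
    by_cases h : ∃ j : Fin (k + 1), t ≤ x j
    · obtain ⟨j₁, hj₁⟩ := h
      have hS : (Finset.univ.filter (fun j : Fin (k + 1) => t ≤ x j)).Nonempty :=
        ⟨j₁, by simp [hj₁]⟩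
      set j₀ := (Finset.univ.filter (fun j : Fin (k + 1) => t ≤ x j)).min' hS with hj₀
      have hj₀mem : t ≤ x j₀ := by
        have := Finset.min'_mem _ hS
        simp only [Finset.mem_filter] at this
        exact this.2
      refine ⟨j₀.castSucc, fun j => ⟨fun hj => ?_, fun hj => ?_⟩⟩
      · by_contra hcon
        push_neg at hcon
        have hjmem : j ∈ Finset.univ.filter (fun j : Fin (k + 1) => t ≤ x j) := by
          simp [hcon.le]
        have := Finset.min'_le _ j hjmem
        rw [← hj₀] at this
        have : (j₀ : ℕ) ≤ (j : ℕ) := Fin.le_def.1 this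
        simp only [Fin.coe_castSucc] at hj
        omega
      · have : (j₀ : ℕ) ≤ (j : ℕ) := by simpa [Fin.coe_castSucc] using hj
        exact le_trans hj₀mem (hxle j₀ j (Fin.le_def.2 this))
    · push_neg at h
      refine ⟨Fin.last (k + 1), fun j => ⟨fun _ => (h j).le, fun hj => ?_⟩⟩
      exfalso
      have := j.isLt
      simp only [Fin.val_last] at hj
      omega
  rw [hpiece i₀ t hmem]
  have key : b i₀ * Real.cosh (t - a i₀) ≤ b i * Real.cosh (t - a i) := by
    rcases le_total i i₀ with hc | hc
    · exact dl_chainR k x a b hstepR (k + 2) i i₀ (by omega) hc t (fun j hj => (hmem j).1 hj)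
    · exact dl_chainL k x a b hstepL (k + 2) i i₀ (by omega) hc t (fun j hj => (hmem j).2 hj)
  exact lt_of_le_of_lt (Real.arsinh_le_arsinh.2 key) (hi t)
end
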